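/- Let T_m be the m-subspace quiver: the quiver with vertex set {0, 1, …, m} whose arrows are exactly i → 0 for 1 ≤ i ≤ m (so 0 is the unique sink and 1,…,m are sources). Then the cardinality of the Hecke–Kiselman monoid HK(T_m) equals 2^m + 3^m. -/

import Mathlib

/-- The defining relations of the Hecke–Kiselman monoid of a quiver with
vertex type `V` and arrow relation `arr`. -/
inductive HKRel {V : Type} (arr : V → V → Prop) : FreeMonoid V → FreeMonoid V → Prop
  | idem (t : V) :
      HKRel arr (FreeMonoid.of t * FreeMonoid.of t) (FreeMonoid.of t)
  | braid (s t : V) :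
      HKRel arr (FreeMonoid.of s * FreeMonoid.of t * FreeMonoid.of s)
        (FreeMonoid.of t * FreeMonoid.of s * FreeMonoid.of t)
  | absorb (s t : V) : ¬ arr t s →
      HKRel arr (FreeMonoid.of t * FreeMonoid.of s * FreeMonoid.of t)
        (FreeMonoid.of s * FreeMonoid.of t)

/-- The congruence on the free monoid generated by the Hecke–Kiselman relations. -/
def HKCon {V : Type} (arr : V → V → Prop) : Con (FreeMonoid V) := conGen (HKRel arr)

/-- The Hecke–Kiselman monoid of the quiver `(V, arr)`. -/
abbrev HK {V : Type} (arr : V → V → Prop) : Type := (HKCon arr).Quotient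

/-- The generator of the Hecke–Kiselman monoid attached to the vertex `t`. -/
def HK.x {V : Type} (arr : V → V → Prop) (t : V) : HK arr :=
  (HKCon arr).mk' (FreeMonoid.of t)

/-- The quiver `(V, arr)` is acyclic: the transitive closure of `arr` is irreflexive. -/
def IsAcyclicQuiver {V : Type} (arr : V → V → Prop) : Prop :=
  ∀ v : V, ¬ Relation.TransGen arr v v

/-- The arrow relation of the `m`-subspace quiver `T_m` with vertices `{0, 1, …, m}`
(modelled as `Fin (m+1)`): the arrows are exactly `i → 0` for `i ≠ 0`, so `0` is the
unique sink and `1, …, m` are sources. -/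
def arrTm (m : ℕ) : Fin (m + 1) → Fin (m + 1) → Prop :=
  fun i j => i ≠ 0 ∧ j = 0

/-!
In `HK(T_m)` the generators `y_i` at the sources commute and are idempotent, and the generator
`z` at the sink satisfies `z y_i z = y_i z = y_i z y_i`. Hence every element is `y_A` or
`y_A z y_B` with `A ∩ B = ∅`, where `y_A = ∏_{i ∈ A} y_i`: there are `2^m + 3^m` such words.
They are pairwise distinct because the rules for multiplying them on the left by a generator
satisfy the defining relations, so they define an action of `HK(T_m)` on these words, and acting
on the empty word recovers each of them.
-/

namespace HK

variable {V : Type} {arr : V → V → Prop}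

theorem mk'_eq_of_rel {a b : FreeMonoid V} (h : HKRel arr a b) :
    (HKCon arr).mk' a = (HKCon arr).mk' b :=
  (HKCon arr).eq.2 (ConGen.Rel.of a b h)

theorem x_mul_self (t : V) : x arr t * x arr t = x arr t := by
  simpa only [x, map_mul] using mk'_eq_of_rel (HKRel.idem (arr := arr) t)

theorem x_braid (s t : V) :
    x arr s * x arr t * x arr s = x arr t * x arr s * x arr t := by
  simpa only [x, map_mul] using mk'_eq_of_rel (HKRel.braid (arr := arr) s t)

theorem x_absorb {s t : V} (h : ¬ arr t s) :
    x arr t * x arr s * x arr t = x arr s * x arr t := by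
  simpa only [x, map_mul] using mk'_eq_of_rel (HKRel.absorb s t h)

theorem x_mul_x_mul_x_of_not_arr {s t : V} (h : ¬ arr t s) :
    x arr s * x arr t * x arr s = x arr s * x arr t :=
  (x_braid s t).trans (x_absorb h)

theorem commute_x {s t : V} (hst : ¬ arr s t) (hts : ¬ arr t s) :
    Commute (x arr s) (x arr t) :=
  calc x arr s * x arr t = x arr s * x arr t * x arr s := (x_mul_x_mul_x_of_not_arr hts).symm
    _ = x arr t * x arr s := x_absorb hst

def lift {M : Type*} [Monoid M] (f : V → M) (idem : ∀ t, f t * f t = f t)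
    (braid : ∀ s t, f s * f t * f s = f t * f s * f t)
    (absorb : ∀ s t, ¬ arr t s → f t * f s * f t = f s * f t) : HK arr →* M :=
  (HKCon arr).lift (FreeMonoid.lift f) <| Con.conGen_le.2 fun a b h => by
    rw [Con.ker_rel]
    cases h with
    | idem t => simpa using idem t
    | braid s t => simpa using braid s t
    | absorb s t h => simpa using absorb s t h

@[simp]
theorem lift_x {M : Type*} [Monoid M] (f : V → M) (idem braid absorb) (t : V) :
    lift (arr := arr) f idem braid absorb (x arr t) = f t :=
  (Con.lift_mk' _ _).trans (FreeMonoid.lift_eval_of _ _)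

@[elab_as_elim]
theorem induction_on {P : HK arr → Prop} (q : HK arr) (one : P 1)
    (x_mul : ∀ t q, P q → P (x arr t * q)) : P q := by
  induction q using Con.induction_on with
  | _ w =>
  induction w using FreeMonoid.inductionOn' with
  | one => exact one
  | of_mul t w ih => exact x_mul t _ ih

end HK

theorem IsIdempotentElem.mul_mul_self_of_commute {M : Type*} [Monoid M] {a b : M}
    (ha : IsIdempotentElem a) (h : Commute a b) : a * b * a = a * b := by
  rw [mul_assoc, ← h.eq, ← mul_assoc, ha.eq]

namespace SubspaceQuiver

variable {m : ℕ}

theorem not_arrTm_zero (v : Fin (m + 1)) : ¬ arrTm m 0 v := fun h => h.1 rfl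

theorem not_arrTm_succ (v : Fin (m + 1)) (j : Fin m) : ¬ arrTm m v j.succ :=
  fun h => j.succ_ne_zero h.2

def lift {M : Type*} [Monoid M] (z : M) (y : Fin m → M) (hz : IsIdempotentElem z)
    (hy : ∀ j, IsIdempotentElem (y j)) (hyy : ∀ i j, Commute (y i) (y j))
    (hzyz : ∀ j, z * y j * z = y j * z) (hyzy : ∀ j, y j * z * y j = y j * z) :
    HK (arrTm m) →* M :=
  HK.lift (Fin.cases z y)
    (fun t => by
      cases t using Fin.cases <;> simp only [Fin.cases_zero, Fin.cases_succ, hz.eq, (hy _).eq])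
    (fun s t => by
      cases s using Fin.cases <;> cases t using Fin.cases <;>
        simp only [Fin.cases_zero, Fin.cases_succ]
      case zero.succ j => rw [hzyz, hyzy]
      case succ.zero i => rw [hzyz, hyzy]
      case succ.succ i j =>
        rw [(hy i).mul_mul_self_of_commute (hyy i j), (hy j).mul_mul_self_of_commute (hyy j i),
          hyy i j])
    (fun s t hts => by
      cases t using Fin.cases with
      | zero =>
        cases s using Fin.cases <;> simp only [Fin.cases_zero, Fin.cases_succ, hz.eq, hzyz]
      | succ i =>
        cases s using Fin.cases with
        | zero => exact absurd ⟨i.succ_ne_zero, rfl⟩ hts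
        | succ j =>
          simp only [Fin.cases_succ]
          rw [(hy i).mul_mul_self_of_commute (hyy i j), hyy i j])

@[simp]
theorem lift_x_zero {M : Type*} [Monoid M] (z : M) (y : Fin m → M) (hz hy hyy hzyz hyzy) :
    lift z y hz hy hyy hzyz hyzy (HK.x (arrTm m) 0) = z :=
  HK.lift_x _ _ _ _ 0

@[simp]
theorem lift_x_succ {M : Type*} [Monoid M] (z : M) (y : Fin m → M) (hz hy hyy hzyz hyzy)
    (j : Fin m) : lift z y hz hy hyy hzyz hyzy (HK.x (arrTm m) j.succ) = y j :=
  HK.lift_x _ _ _ _ j.succ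

def sink (m : ℕ) : HK (arrTm m) := HK.x (arrTm m) 0

def source (j : Fin m) : HK (arrTm m) := HK.x (arrTm m) j.succ

theorem isIdempotentElem_sink : IsIdempotentElem (sink m) := HK.x_mul_self 0

theorem isIdempotentElem_source (j : Fin m) : IsIdempotentElem (source j) := HK.x_mul_self _

theorem commute_source (i j : Fin m) : Commute (source i) (source j) :=
  HK.commute_x (not_arrTm_succ _ _) (not_arrTm_succ _ _)

theorem sink_mul_source_mul_sink (j : Fin m) : sink m * source j * sink m = source j * sink m :=
  HK.x_absorb (not_arrTm_zero _)

theorem source_mul_sink_mul_source (j : Fin m) :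
    source j * sink m * source j = source j * sink m :=
  HK.x_mul_x_mul_x_of_not_arr (not_arrTm_zero _)

def sourceProd (A : Finset (Fin m)) : HK (arrTm m) :=
  A.noncommProd source fun i _ j _ _ => commute_source i j

@[simp]
theorem sourceProd_empty : sourceProd (∅ : Finset (Fin m)) = 1 := Finset.noncommProd_empty _ _

theorem sourceProd_insert {j : Fin m} {A : Finset (Fin m)} (h : j ∉ A) :
    sourceProd (insert j A) = source j * sourceProd A :=
  Finset.noncommProd_insert_of_notMem _ _ _ _ h

theorem commute_source_sourceProd (j : Fin m) (A : Finset (Fin m)) :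
    Commute (source j) (sourceProd A) :=
  Finset.noncommProd_commute _ _ _ _ fun i _ => commute_source j i

theorem source_mul_sourceProd (j : Fin m) (A : Finset (Fin m)) :
    source j * sourceProd A = sourceProd (insert j A) := by
  by_cases h : j ∈ A
  · rw [Finset.insert_eq_of_mem h, ← Finset.insert_erase h,
      sourceProd_insert (Finset.notMem_erase j A), ← mul_assoc, (isIdempotentElem_source j).eq]
  · rw [sourceProd_insert h]

theorem sink_mul_sourceProd_mul_sink (A : Finset (Fin m)) :
    sink m * sourceProd A * sink m = sourceProd A * sink m := by
  induction A using Finset.induction with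
  | empty => simpa using isIdempotentElem_sink.eq
  | insert j A hj ih =>
    calc sink m * sourceProd (insert j A) * sink m
        = sink m * sourceProd A * (sink m * source j * sink m) := by
          rw [sourceProd_insert hj, (commute_source_sourceProd j A).eq, sink_mul_source_mul_sink]
          simp only [mul_assoc]
      _ = sourceProd A * (sink m * source j * sink m) := by
          simp only [← mul_assoc, ih]
      _ = sourceProd (insert j A) * sink m := by
          rw [sink_mul_source_mul_sink, sourceProd_insert hj, (commute_source_sourceProd j A).eq,
            mul_assoc]

theorem source_mul_sink_mul_sourceProd_erase (j : Fin m) (B : Finset (Fin m)) :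
    source j * sink m * sourceProd (B.erase j) = source j * sink m * sourceProd B := by
  by_cases h : j ∈ B
  · conv_rhs => rw [← Finset.insert_erase h, sourceProd_insert (Finset.notMem_erase j B),
      ← mul_assoc, source_mul_sink_mul_source]
  · rw [Finset.erase_eq_of_notMem h]

theorem sourceProd_insert_mul_sink_mul_sourceProd_erase (j : Fin m) (A B : Finset (Fin m)) :
    sourceProd (insert j A) * sink m * sourceProd (B.erase j) =
      source j * (sourceProd A * sink m * sourceProd B) :=
  calc sourceProd (insert j A) * sink m * sourceProd (B.erase j)
      = sourceProd A * (source j * sink m * sourceProd (B.erase j)) := by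
        rw [← source_mul_sourceProd, (commute_source_sourceProd j A).eq]
        simp only [mul_assoc]
    _ = sourceProd A * (source j * sink m * sourceProd B) := by
        rw [source_mul_sink_mul_sourceProd_erase]
    _ = source j * (sourceProd A * sink m * sourceProd B) := by
        simp only [← mul_assoc, (commute_source_sourceProd j A).eq]

/-- `.inl A` stands for `y_A` and `.inr g` for `y_{g⁻¹ 1} z y_{g⁻¹ 2}`: a source `i` with
`g i = 0` does not occur, one with `g i = 1` occurs before `z`, one with `g i = 2` only after it. -/
abbrev NormalForm (m : ℕ) : Type := Finset (Fin m) ⊕ (Fin m → Fin 3)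

namespace NormalForm

def eval : NormalForm m → HK (arrTm m)
  | .inl A => sourceProd A
  | .inr g => sourceProd {i | g i = 1} * sink m * sourceProd {i | g i = 2}

def sinkAct : Function.End (NormalForm m)
  | .inl A => .inr fun i => if i ∈ A then 2 else 0
  | .inr g => .inr g

def sourceAct (j : Fin m) : Function.End (NormalForm m)
  | .inl A => .inl (insert j A)
  | .inr g => .inr (Function.update g j 1)

theorem sinkAct_sinkAct (n : NormalForm m) : sinkAct (sinkAct n) = sinkAct n := by
  cases n <;> rfl

theorem sourceAct_sourceAct (j : Fin m) (n : NormalForm m) :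
    sourceAct j (sourceAct j n) = sourceAct j n := by
  cases n <;> simp [sourceAct]

theorem sourceAct_comm (i j : Fin m) (n : NormalForm m) :
    sourceAct i (sourceAct j n) = sourceAct j (sourceAct i n) := by
  obtain rfl | hij := eq_or_ne i j
  · rfl
  cases n <;> simp [sourceAct, Finset.insert_comm, Function.update_comm hij]

theorem sinkAct_sourceAct_sinkAct (j : Fin m) (n : NormalForm m) :
    sinkAct (sourceAct j (sinkAct n)) = sourceAct j (sinkAct n) := by
  cases n <;> rfl

theorem sourceAct_sinkAct_sourceAct (j : Fin m) (n : NormalForm m) :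
    sourceAct j (sinkAct (sourceAct j n)) = sourceAct j (sinkAct n) := by
  cases n with
  | inl A =>
    simp only [sourceAct, sinkAct, Sum.inr.injEq]
    funext i
    by_cases hi : i = j <;> simp [hi]
  | inr g => simp [sourceAct, sinkAct]

def toEnd : HK (arrTm m) →* Function.End (NormalForm m) :=
  lift (M := Function.End (NormalForm m)) sinkAct sourceAct (funext sinkAct_sinkAct)
    (fun j => funext (sourceAct_sourceAct j)) (fun i j => funext (sourceAct_comm i j))
    (fun j => funext (sinkAct_sourceAct_sinkAct j))
    (fun j => funext (sourceAct_sinkAct_sourceAct j))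

def ofHK (q : HK (arrTm m)) : NormalForm m := toEnd q (.inl ∅)

theorem toEnd_mul_apply (q r : HK (arrTm m)) (n : NormalForm m) :
    toEnd (q * r) n = toEnd q (toEnd r n) := by
  rw [map_mul]; rfl

theorem toEnd_sink : toEnd (sink m) = sinkAct := lift_x_zero (M := Function.End (NormalForm m)) ..

theorem toEnd_source (j : Fin m) : toEnd (source j) = sourceAct j :=
  lift_x_succ (M := Function.End (NormalForm m)) ..

theorem eval_sinkAct (n : NormalForm m) : eval (sinkAct n) = sink m * eval n := by
  cases n with
  | inl A =>
    have h1 : ({i | (if i ∈ A then 2 else 0 : Fin 3) = 1} : Finset (Fin m)) = ∅ := by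
      ext i; by_cases hi : i ∈ A <;> simp [hi]
    have h2 : ({i | (if i ∈ A then 2 else 0 : Fin 3) = 2} : Finset (Fin m)) = A := by
      ext i; by_cases hi : i ∈ A <;> simp [hi]
    simp only [sinkAct, eval, h1, h2, sourceProd_empty, one_mul]
  | inr g => simp only [sinkAct, eval, ← mul_assoc, sink_mul_sourceProd_mul_sink]

theorem eval_sourceAct (j : Fin m) (n : NormalForm m) :
    eval (sourceAct j n) = source j * eval n := by
  cases n with
  | inl A => exact (source_mul_sourceProd j A).symm
  | inr g =>
    have h1 : ({i | Function.update g j 1 i = 1} : Finset (Fin m)) =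
        insert j ({i | g i = 1} : Finset (Fin m)) := by
      ext i; by_cases hi : i = j <;> simp [hi]
    have h2 : ({i | Function.update g j 1 i = 2} : Finset (Fin m)) =
        ({i | g i = 2} : Finset (Fin m)).erase j := by
      ext i; by_cases hi : i = j <;> simp [hi]
    simp only [sourceAct, eval, h1, h2, sourceProd_insert_mul_sink_mul_sourceProd_erase]

theorem eval_ofHK (q : HK (arrTm m)) : eval (ofHK q) = q := by
  induction q using HK.induction_on with
  | one => exact sourceProd_empty
  | x_mul t q ih =>
    rw [ofHK, toEnd_mul_apply, ← ofHK]
    cases t using Fin.cases with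
    | zero => rw [← sink, toEnd_sink, eval_sinkAct, ih]
    | succ j => rw [← source, toEnd_source, eval_sourceAct, ih]

theorem toEnd_sourceProd_inl (A B : Finset (Fin m)) :
    toEnd (sourceProd A) (.inl B) = .inl (A ∪ B) := by
  induction A using Finset.induction with
  | empty => rw [sourceProd_empty, map_one, Finset.empty_union]; rfl
  | insert j A hj ih =>
    rw [sourceProd_insert hj, toEnd_mul_apply, ih, toEnd_source]
    simp [sourceAct]

theorem toEnd_sourceProd_inr (A : Finset (Fin m)) (g : Fin m → Fin 3) :
    toEnd (sourceProd A) (.inr g) = .inr fun i => if i ∈ A then 1 else g i := by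
  induction A using Finset.induction with
  | empty => rw [sourceProd_empty, map_one]; rfl
  | insert j A hj ih =>
    rw [sourceProd_insert hj, toEnd_mul_apply, ih, toEnd_source]
    simp only [sourceAct, Sum.inr.injEq]
    funext i
    by_cases hi : i = j <;> simp [hi]

theorem ofHK_eval (n : NormalForm m) : ofHK (eval n) = n := by
  cases n with
  | inl A => simp [ofHK, eval, toEnd_sourceProd_inl]
  | inr g =>
    simp only [ofHK, eval, toEnd_mul_apply, toEnd_sourceProd_inl, toEnd_sink, sinkAct,
      toEnd_sourceProd_inr, Sum.inr.injEq]
    funext i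
    obtain h | h | h : g i = 0 ∨ g i = 1 ∨ g i = 2 := by omega
    all_goals simp [h]

def equivHK : NormalForm m ≃ HK (arrTm m) where
  toFun := eval
  invFun := ofHK
  left_inv := ofHK_eval
  right_inv := eval_ofHK

theorem natCard_eq : Nat.card (NormalForm m) = 2 ^ m + 3 ^ m := by
  simp

end NormalForm

end SubspaceQuiver

/-- The cardinality of the Hecke–Kiselman monoid of the
`m`-subspace quiver `T_m` equals `2^m + 3^m`. -/
theorem hk_card_subspace_quiver (m : ℕ) :
    Nat.card (HK (arrTm m)) = 2 ^ m + 3 ^ m := by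
  rw [← Nat.card_congr SubspaceQuiver.NormalForm.equivHK, SubspaceQuiver.NormalForm.natCard_eq]
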